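/- Let b_k(i), b_k(j) ∈ ℝ³ for k = 1,…,K, and define over the standard simplex Δ_K = {c ∈ ℝ^K : c ≥ 0, 𝟏ᵀc = 1} the quantities b_{ij}^{min} = min_{c ∈ Δ_K} ‖Σ_k c_k (b_k(j) − b_k(i))‖ and b_{ij}^{max} = max_{c ∈ Δ_K} ‖Σ_k c_k (b_k(j) − b_k(i))‖. If y(i) = R Σ_k c_k b_k(i) + t + ε(i) and y(j) = R Σ_k c_k b_k(j) + t + ε(j) for some R ∈ SO(3), t ∈ ℝ³, c ∈ Δ_K, with ‖ε(i)‖ ≤ ε and ‖ε(j)‖ ≤ ε, then b_{ij}^{min} − 2ε ≤ ‖y(j) − y(i)‖ ≤ b_{ij}^{max} + 2ε. -/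

import Mathlib

open Matrix Finset

noncomputable section

/-- The Euclidean space `ℝ³`. -/
abbrev E3 : Type := EuclideanSpace ℝ (Fin 3)

/-- Action of a `3×3` matrix on a vector of `ℝ³`. -/
def mv (R : Matrix (Fin 3) (Fin 3) ℝ) (v : E3) : E3 := WithLp.toLp 2 (R.mulVec v)

/-- `R ∈ SO(3)`: `RᵀR = I₃` and `det R = 1`. -/
def SO3 (R : Matrix (Fin 3) (Fin 3) ℝ) : Prop := Rᵀ * R = 1 ∧ R.det = 1

/-!
The translation `t` cancels in `y(j) − y(i)` and the orthogonal `R` preserves the norm of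
`Σₖ cₖ (bₖ(j) − bₖ(i))`, which lies between `sInf` and `sSup` of the set of such norms over the
simplex; this set is compact, so both are genuine bounds. The noise terms move the norm by at most
`‖ε(i)‖ + ‖ε(j)‖ ≤ 2ε`.
-/

lemma norm_toEuclideanLin_of_transpose_mul_self {n : Type*} [Fintype n] [DecidableEq n]
    {R : Matrix n n ℝ} (hR : Rᵀ * R = 1) (v : EuclideanSpace ℝ n) :
    ‖toEuclideanLin R v‖ = ‖v‖ :=
  (toEuclideanCLM (𝕜 := ℝ) R).norm_map_of_mem_unitary
    (Unitary.map_mem _ (mem_unitaryGroup_iff'.mpr hR)) v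

lemma norm_mv_of_transpose_mul_self {R : Matrix (Fin 3) (Fin 3) ℝ} (hR : Rᵀ * R = 1) (v : E3) :
    ‖mv R v‖ = ‖v‖ :=
  norm_toEuclideanLin_of_transpose_mul_self hR v

lemma mv_sub (R : Matrix (Fin 3) (Fin 3) ℝ) (u v : E3) : mv R u - mv R v = mv R (u - v) :=
  (map_sub (toEuclideanLin R) u v).symm

lemma isCompact_setOf_norm_sum_smul {ι E : Type*} [Fintype ι] [SeminormedAddCommGroup E]
    [NormedSpace ℝ E] (w : ι → E) :
    IsCompact {v : ℝ | ∃ c : ι → ℝ, (∀ k, 0 ≤ c k) ∧ ∑ k, c k = 1 ∧ v = ‖∑ k, c k • w k‖} := by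
  convert (isCompact_stdSimplex ℝ ι).image (f := fun c => ‖∑ k, c k • w k‖) (by fun_prop) using 1
  ext v
  simp only [Set.mem_ofPred_eq, Set.mem_image, stdSimplex, and_assoc, eq_comm (a := v)]

lemma abs_norm_sub_sub_norm_sub_le {E : Type*} [SeminormedAddCommGroup E] (u v t e₁ e₂ : E) :
    |‖(u + t + e₁) - (v + t + e₂)‖ - ‖u - v‖| ≤ ‖e₁‖ + ‖e₂‖ :=
  calc |‖(u + t + e₁) - (v + t + e₂)‖ - ‖u - v‖| ≤ ‖(u + t + e₁) - (v + t + e₂) - (u - v)‖ :=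
        abs_norm_sub_norm_le _ _
    _ = ‖e₁ - e₂‖ := by congr 1; abel
    _ ≤ ‖e₁‖ + ‖e₂‖ := norm_sub_le _ _

/-- compatibility test with convex-hull distances: with
`b_{ij}^{min}`/`b_{ij}^{max}` the min/max over the standard simplex of
`‖Σₖ cₖ (bₖ(j) − bₖ(i))‖`, any pair of inliers satisfies
`b_{ij}^{min} − 2ε ≤ ‖y(j) − y(i)‖ ≤ b_{ij}^{max} + 2ε`. -/
theorem convex_hull_compatibility_test (N K : ℕ)
    (y : Fin N → E3) (b : Fin K → Fin N → E3) (i j : Fin N)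
    (bmin bmax : ℝ)
    (hbmin : bmin = sInf {v : ℝ | ∃ c : Fin K → ℝ, (∀ k, 0 ≤ c k) ∧ ∑ k, c k = 1 ∧
      v = ‖∑ k, c k • (b k j - b k i)‖})
    (hbmax : bmax = sSup {v : ℝ | ∃ c : Fin K → ℝ, (∀ k, 0 ≤ c k) ∧ ∑ k, c k = 1 ∧
      v = ‖∑ k, c k • (b k j - b k i)‖})
    (R : Matrix (Fin 3) (Fin 3) ℝ) (hR : SO3 R) (t : E3)
    (c : Fin K → ℝ) (hc : (∀ k, 0 ≤ c k) ∧ ∑ k, c k = 1)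
    (εi εj : E3) (ε : ℝ)
    (hyi : y i = mv R (∑ k, c k • b k i) + t + εi)
    (hyj : y j = mv R (∑ k, c k • b k j) + t + εj)
    (hεi : ‖εi‖ ≤ ε) (hεj : ‖εj‖ ≤ ε) :
    bmin - 2 * ε ≤ ‖y j - y i‖ ∧ ‖y j - y i‖ ≤ bmax + 2 * ε := by
  set w := ∑ k, c k • (b k j - b k i)
  have hS := isCompact_setOf_norm_sum_smul fun k => b k j - b k i
  have hw : ‖w‖ ∈ {v : ℝ | ∃ c : Fin K → ℝ, (∀ k, 0 ≤ c k) ∧ ∑ k, c k = 1 ∧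
      v = ‖∑ k, c k • (b k j - b k i)‖} := ⟨c, hc.1, hc.2, rfl⟩
  have hsignal : ‖mv R (∑ k, c k • b k j) - mv R (∑ k, c k • b k i)‖ = ‖w‖ := by
    rw [mv_sub, norm_mv_of_transpose_mul_self hR.1, ← sum_sub_distrib]
    simp only [w, smul_sub]
  have hnoise : |‖y j - y i‖ - ‖w‖| ≤ 2 * ε := by
    rw [hyi, hyj, ← hsignal]
    linarith [abs_norm_sub_sub_norm_sub_le (mv R (∑ k, c k • b k j))
      (mv R (∑ k, c k • b k i)) t εj εi]
  have hmin : bmin ≤ ‖w‖ := hbmin ▸ csInf_le hS.bddBelow hw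
  have hmax : ‖w‖ ≤ bmax := hbmax ▸ le_csSup hS.bddAbove hw
  rw [abs_le] at hnoise
  constructor <;> linarith
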